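/- arXiv:1707.03090 — 7 statements merged into one kernel-verified Lean document; each statement's English description precedes it below -/
import Mathlib

section
/- Let H be a finite group such that for every subset S ⊆ H the Haar graph H(H,S) is a Cayley graph, and let K be a subgroup of H. Then for every subset S ⊆ K, the Haar graph H(K,S) is a Cayley graph. -/
/-- The Haar graph of a group `H` with connection set `S ⊆ H`: the bipartite
graph on two copies of `H` (indexed by `Bool`; `false` is the copy `H₀`,
`true` is the copy `H₁`) in which `h₀` is adjacent to `(s*h)₁` for `s ∈ S`. -/
def haarGraph {H : Type*} [Group H] (S : Set H) : SimpleGraph (Bool × H) where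
  Adj u v := (u.1 = false ∧ v.1 = true ∧ v.2 * u.2⁻¹ ∈ S) ∨
             (u.1 = true ∧ v.1 = false ∧ u.2 * v.2⁻¹ ∈ S)
  symm := by
    constructor
    rintro ⟨i, x⟩ ⟨j, y⟩ (⟨h1, h2, h3⟩ | ⟨h1, h2, h3⟩)
    · exact Or.inr ⟨h2, h1, h3⟩
    · exact Or.inl ⟨h2, h1, h3⟩
  loopless := by
    constructor
    rintro ⟨i, x⟩ (⟨h1, h2, _⟩ | ⟨h1, h2, _⟩) <;> simp_all

/-- A graph is a Cayley graph if its automorphism group contains a subgroup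
acting regularly on the vertex set. -/
def IsCayleyGraph {V : Type*} (Γ : SimpleGraph V) : Prop :=
  ∃ G : Subgroup (Equiv.Perm V),
    (∀ g ∈ G, ∀ u v : V, Γ.Adj (g u) (g v) ↔ Γ.Adj u v) ∧
    (∀ u v : V, ∃! g : Equiv.Perm V, g ∈ G ∧ g u = v)

/-- A graph is vertex-transitive if its automorphism group acts transitively
on the vertices. -/
def IsVertexTransitive {V : Type*} (Γ : SimpleGraph V) : Prop :=
  ∀ u v : V, ∃ f : Γ ≃g Γ, f u = v

/-- A group is inner abelian if it is non-abelian but every proper subgroup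
is abelian. -/
def IsInnerAbelian (H : Type*) [Group H] : Prop :=
  (¬ ∀ a b : H, a * b = b * a) ∧
    ∀ K : Subgroup H, K ≠ ⊤ → ∀ a b : H, a ∈ K → b ∈ K → a * b = b * a

/-! Let `S'` be `S` viewed inside `H`. The inclusion `H(K,S) ↪ H(H,S')` has image closed under
adjacency, so it identifies the components of `(0,1)` in the two graphs. A component of a Cayley
graph is Cayley, since its setwise stabiliser in a regular group of automorphisms acts regularly
on it; hence the component `C` of `(0,1)` in `H(K,S)` is Cayley. If `S ≠ ∅`, every component of
`H(K,S)` meets `K₀` and is therefore the image of `C` under a right translation `h ↦ hk`, which is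
an automorphism. So `H(K,S)` is a disjoint union of copies of `C`, i.e. `C □ ⊥`, and box products
of Cayley graphs are Cayley. If `S = ∅` the graph is edgeless, hence Cayley. -/

open Equiv SimpleGraph
open scoped Pointwise

section Cayley

variable {V W : Type*} {Γ : SimpleGraph V} {Δ : SimpleGraph W}

theorem isCayleyGraph_of_mulAction {G : Type*} [Group G] [MulAction G V]
    (hadj : ∀ (g : G) (u v : V), Γ.Adj (g • u) (g • v) ↔ Γ.Adj u v)
    (hreg : ∀ u v : V, ∃! g : G, g • u = v) : IsCayleyGraph Γ := by
  refine ⟨(MulAction.toPermHom G V).range, ?_, fun u v => ?_⟩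
  · rintro _ ⟨g, rfl⟩ u v
    exact hadj g u v
  · obtain ⟨g, hg, huniq⟩ := hreg u v
    refine ⟨MulAction.toPerm g, ⟨⟨g, rfl⟩, hg⟩, ?_⟩
    rintro _ ⟨⟨g', rfl⟩, hg'⟩
    rw [huniq g' hg']
    rfl

theorem IsCayleyGraph.exists_subgroup (h : IsCayleyGraph Γ) :
    ∃ G : Subgroup (Perm V), (∀ (g : G) (u v : V), Γ.Adj (g • u) (g • v) ↔ Γ.Adj u v) ∧
      ∀ u v : V, ∃! g : G, g • u = v := by
  obtain ⟨G, hadj, hreg⟩ := h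
  refine ⟨G, fun g => hadj g g.2, fun u v => ?_⟩
  obtain ⟨g, ⟨hgG, hg⟩, huniq⟩ := hreg u v
  exact ⟨⟨g, hgG⟩, hg, fun g' hg' => Subtype.ext (huniq g' ⟨g'.2, hg'⟩)⟩

theorem IsCayleyGraph.of_iso (e : Γ ≃g Δ) (h : IsCayleyGraph Γ) : IsCayleyGraph Δ := by
  obtain ⟨G, hadj, hreg⟩ := h.exists_subgroup
  let _ : MulAction G W := e.symm.toEquiv.mulAction G
  have hsmul (g : G) (w : W) : g • w = e (g • e.symm w) := rfl
  refine isCayleyGraph_of_mulAction (G := G) (fun g u v => ?_) (fun u v => ?_)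
  · rw [hsmul, hsmul, e.map_adj_iff, hadj, ← e.symm.map_adj_iff]
  · refine (existsUnique_congr fun g => ?_).mp (hreg (e.symm u) (e.symm v))
    rw [hsmul]
    exact e.eq_symm_apply

theorem isCayleyGraph_bot (T : Type*) [Finite T] [Nonempty T] :
    IsCayleyGraph (⊥ : SimpleGraph T) := by
  obtain ⟨n, ⟨e⟩⟩ := Finite.exists_equiv_fin T
  have : NeZero n := ⟨fun hn => (hn ▸ e).isEmpty.false (Classical.arbitrary T)⟩
  let _ : Group T := (e.trans Multiplicative.ofAdd).group
  refine isCayleyGraph_of_mulAction (G := T) (fun _ _ _ => Iff.rfl) (fun u v => ?_)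
  exact ⟨v * u⁻¹, inv_mul_cancel_right v u, fun g hg => eq_mul_inv_of_mul_eq hg⟩

theorem IsCayleyGraph.boxProd (h₁ : IsCayleyGraph Γ) (h₂ : IsCayleyGraph Δ) :
    IsCayleyGraph (Γ □ Δ) := by
  obtain ⟨G₁, hadj₁, hreg₁⟩ := h₁.exists_subgroup
  obtain ⟨G₂, hadj₂, hreg₂⟩ := h₂.exists_subgroup
  let _ : MulAction (G₁ × G₂) (V × W) :=
    { smul g x := (g.1 • x.1, g.2 • x.2)
      one_smul _ := rfl
      mul_smul _ _ _ := rfl }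
  refine isCayleyGraph_of_mulAction (G := G₁ × G₂) (fun g u v => ?_) (fun u v => ?_)
  · change (Γ □ Δ).Adj (g.1 • u.1, g.2 • u.2) (g.1 • v.1, g.2 • v.2) ↔ _
    simp only [boxProd_adj, hadj₁, hadj₂, smul_left_cancel_iff]
  · obtain ⟨g₁, hg₁, huniq₁⟩ := hreg₁ u.1 v.1
    obtain ⟨g₂, hg₂, huniq₂⟩ := hreg₂ u.2 v.2
    refine ⟨(g₁, g₂), Prod.ext hg₁ hg₂, fun g hg => Prod.ext ?_ ?_⟩
    · exact huniq₁ g.1 (congrArg Prod.fst hg)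
    · exact huniq₂ g.2 (congrArg Prod.snd hg)

theorem IsCayleyGraph.connectedComponent (h : IsCayleyGraph Γ) (c : Γ.ConnectedComponent) :
    IsCayleyGraph (Γ.induce c.supp) := by
  obtain ⟨G, hadj, hreg⟩ := h.exists_subgroup
  have hreach (g : G) (u v : V) : Γ.Reachable (g • u) (g • v) ↔ Γ.Reachable u v :=
    Iso.reachable_iff (φ := ⟨MulAction.toPerm g, hadj g _ _⟩)
  refine isCayleyGraph_of_mulAction (G := MulAction.stabilizer G c.supp)
    (fun g u v => hadj g u v) (fun ⟨u, hu⟩ ⟨v, hv⟩ => ?_)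
  obtain ⟨g, hg, huniq⟩ := hreg u v
  have hgc : g ∈ MulAction.stabilizer G c.supp := by
    have hcu : c = Γ.connectedComponentMk u := hu.symm
    have hcv : c = Γ.connectedComponentMk (g • u) := hg ▸ hv.symm
    refine MulAction.mem_stabilizer_set.mpr fun x => ?_
    rw [c.mem_supp_iff, c.mem_supp_iff]
    nth_rw 1 [hcv]
    rw [hcu, ConnectedComponent.eq, ConnectedComponent.eq, hreach]
  exact ⟨⟨g, hgc⟩, Subtype.ext hg, fun g' hg' => Subtype.ext (huniq g' (congrArg Subtype.val hg'))⟩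

end Cayley

section Components

variable {V W : Type*} {Γ : SimpleGraph V} {Δ : SimpleGraph W}

theorem SimpleGraph.Embedding.exists_eq_of_reachable (f : Γ ↪g Δ)
    (hf : ∀ u w, Δ.Adj (f u) w → w ∈ Set.range f) {u : V} {w : W} (h : Δ.Reachable (f u) w) :
    ∃ x, f x = w ∧ Γ.Reachable u x := by
  have h' := (reachable_iff_reflTransGen _ _).mp h
  clear h
  induction h' with
  | refl => exact ⟨u, rfl, .rfl⟩
  | tail _ hadj ih =>
    obtain ⟨x, rfl, hx⟩ := ih
    obtain ⟨x', rfl⟩ := hf x _ hadj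
    exact ⟨x', rfl, hx.trans (f.map_adj_iff.mp hadj).reachable⟩

theorem SimpleGraph.Embedding.image_supp (f : Γ ↪g Δ)
    (hf : ∀ u w, Δ.Adj (f u) w → w ∈ Set.range f) (c : Γ.ConnectedComponent) :
    f '' c.supp = (c.map f.toHom).supp := by
  induction c using ConnectedComponent.ind with | _ v => ?_
  ext w
  simp only [Set.mem_image, ConnectedComponent.mem_supp_iff, ConnectedComponent.map_mk,
    ConnectedComponent.eq]
  constructor
  · rintro ⟨x, hx, rfl⟩
    exact hx.map f.toHom
  · intro h
    obtain ⟨x, rfl, hx⟩ := f.exists_eq_of_reachable hf h.symm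
    exact ⟨x, hx.symm, rfl⟩

noncomputable def SimpleGraph.Embedding.induceSuppIso (f : Γ ↪g Δ)
    (hf : ∀ u w, Δ.Adj (f u) w → w ∈ Set.range f) (c : Γ.ConnectedComponent) :
    Γ.induce c.supp ≃g Δ.induce (c.map f.toHom).supp where
  toEquiv := (Equiv.Set.image f c.supp f.injective).trans (Equiv.setCongr (f.image_supp hf c))
  map_rel_iff' := f.map_adj_iff

noncomputable def SimpleGraph.induceSuppBoxProdBotIso (v₀ : V)
    (φ : Γ.ConnectedComponent → Γ ≃g Γ) (hφ : ∀ t, Γ.connectedComponentMk (φ t v₀) = t) :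
    (Γ.induce (Γ.connectedComponentMk v₀).supp).boxProd (⊥ : SimpleGraph Γ.ConnectedComponent) ≃g Γ := by
  have hmk (t) (x : (Γ.connectedComponentMk v₀).supp) : Γ.connectedComponentMk (φ t x) = t :=
    (ConnectedComponent.sound (Iso.reachable_iff.mpr (ConnectedComponent.exact x.2))).trans (hφ t)
  have hbij : Function.Bijective
      fun p : (Γ.connectedComponentMk v₀).supp × Γ.ConnectedComponent => φ p.2 p.1 := by
    refine ⟨fun ⟨x, t⟩ ⟨x', t'⟩ h => ?_, fun y => ?_⟩
    · have h : φ t x = φ t' x' := h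
      obtain rfl : t = t' := (hmk t x).symm.trans ((congrArg _ h).trans (hmk t' x'))
      exact Prod.ext (Subtype.ext ((φ t).injective h)) rfl
    · refine ⟨(⟨(φ (Γ.connectedComponentMk y)).symm y, ?_⟩, Γ.connectedComponentMk y),
        (φ _).apply_symm_apply y⟩
      rw [ConnectedComponent.mem_supp_iff, ConnectedComponent.eq, Iso.symm_apply_reachable,
        ← ConnectedComponent.eq, hφ]
  refine ⟨Equiv.ofBijective _ hbij, fun {p q} => ?_⟩
  obtain ⟨x, t⟩ := p
  obtain ⟨x', t'⟩ := q
  simp only [Equiv.ofBijective_apply, boxProd_adj, bot_adj, false_and, or_false, induce_adj]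
  constructor
  · intro h
    obtain rfl : t = t' := (hmk t x).symm.trans
      ((ConnectedComponent.connectedComponentMk_eq_of_adj h).trans (hmk t' x'))
    exact ⟨(φ t).map_adj_iff.mp h, rfl⟩
  · rintro ⟨h, rfl⟩
    exact (φ t).map_adj_iff.mpr h

end Components

section Haar

variable {G : Type*} [Group G]

theorem haarGraph_empty : haarGraph (∅ : Set G) = ⊥ := by
  ext
  simp [haarGraph]

def haarGraphMulRight (S : Set G) (k : G) : haarGraph S ≃g haarGraph S where
  toEquiv := Equiv.prodCongr (Equiv.refl Bool) (Equiv.mulRight k)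
  map_rel_iff' := by simp [haarGraph, mul_assoc]

@[simp]
theorem haarGraphMulRight_apply (S : Set G) (k : G) (v : Bool × G) :
    haarGraphMulRight S k v = (v.1, v.2 * k) :=
  rfl

theorem haarGraph_exists_connectedComponentMk_eq {S : Set G} (hS : S.Nonempty)
    (c : (haarGraph S).ConnectedComponent) :
    ∃ k, (haarGraph S).connectedComponentMk (false, k) = c := by
  obtain ⟨s, hs⟩ := hS
  induction c using ConnectedComponent.ind with | _ v => ?_
  obtain ⟨_ | _, k⟩ := v
  · exact ⟨k, rfl⟩
  · refine ⟨s⁻¹ * k, ConnectedComponent.connectedComponentMk_eq_of_adj (Or.inl ⟨rfl, rfl, ?_⟩)⟩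
    simpa [mul_assoc] using hs

noncomputable def haarGraphBoxProdBotIso {S : Set G} (hS : S.Nonempty) :
    ((haarGraph S).induce ((haarGraph S).connectedComponentMk (false, 1)).supp).boxProd
      (⊥ : SimpleGraph (haarGraph S).ConnectedComponent) ≃g
      haarGraph S :=
  induceSuppBoxProdBotIso (false, 1)
    (fun c => haarGraphMulRight S (haarGraph_exists_connectedComponentMk_eq hS c).choose)
    (fun c => by simpa using
      (haarGraph_exists_connectedComponentMk_eq hS c).choose_spec)

variable {K : Subgroup G}

def haarGraphSubgroupEmbedding (S : Set K) : haarGraph S ↪g haarGraph ((↑) '' S : Set G) where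
  toFun := Prod.map id (↑)
  inj' := Function.injective_id.prodMap Subtype.coe_injective
  map_rel_iff' {u v} := by
    have hmem (a : K) : (a : G) ∈ ((↑) '' S : Set G) ↔ a ∈ S := Subtype.coe_injective.mem_set_image
    change (_ ∧ _ ∧ (v.2 : G) * (u.2 : G)⁻¹ ∈ _) ∨ (_ ∧ _ ∧ (u.2 : G) * (v.2 : G)⁻¹ ∈ _) ↔ _
    simp only [← Subgroup.coe_inv, ← Subgroup.coe_mul, hmem]
    rfl

theorem haarGraphSubgroupEmbedding_adj_mem_range {S : Set K} (u : Bool × K) (w : Bool × G)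
    (h : (haarGraph ((↑) '' S : Set G)).Adj (haarGraphSubgroupEmbedding S u) w) :
    w ∈ Set.range (haarGraphSubgroupEmbedding S) := by
  have hw : w.2 ∈ K := by
    rcases h with ⟨-, -, s, -, hs⟩ | ⟨-, -, s, -, hs⟩
    · exact (K.mul_mem_cancel_right (K.inv_mem u.2.2)).mp (hs ▸ s.2)
    · exact K.inv_mem_iff.mp ((K.mul_mem_cancel_left u.2.2).mp (hs ▸ s.2))
  exact ⟨(w.1, ⟨w.2, hw⟩), rfl⟩

end Haar

theorem haar_cayley_closed_under_subgroups
    {H : Type*} [Group H] [Finite H]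
    (hCay : ∀ S : Set H, IsCayleyGraph (haarGraph S))
    (K : Subgroup H) :
    ∀ S : Set K, IsCayleyGraph (haarGraph S) := by
  intro S
  rcases S.eq_empty_or_nonempty with rfl | hS
  · rw [haarGraph_empty]
    exact isCayleyGraph_bot _
  have hbase : IsCayleyGraph
      ((haarGraph S).induce ((haarGraph S).connectedComponentMk (false, 1)).supp) :=
    ((hCay _).connectedComponent _).of_iso ((haarGraphSubgroupEmbedding S).induceSuppIso
      haarGraphSubgroupEmbedding_adj_mem_range _).symm
  exact (hbase.boxProd (isCayleyGraph_bot _)).of_iso (haarGraphBoxProdBotIso hS)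
end

section
/- Let p and q be distinct primes with q > 2, and let H be a finite inner abelian group with normal elementary abelian Sylow p-subgroup P of order p^n and cyclic Sylow q-subgroup Q = ⟨b⟩, so that H = P⟨b⟩. Let S_1 ⊆ P with 1 ∈ S_1, let Γ = H(H, S_1 ∪ {b}), and let Ā be the subgroup of Aut(Γ) consisting of all automorphisms fixing each of the two bipartition sets H_0 and H_1 setwise. If either S_1 = S_1^{-1}, or |S_1| = 4, |S_1 ∩ S_1^{-1}| = 3 and |⟨S_1⟩| = p^2, then Ā acts faithfully on H_0; that is, any automorphism in Ā fixing every vertex of H_0 is the identity. -/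
/-!
An automorphism of `H(H, S)` fixing `H₀` pointwise sends `h₁` to a vertex `h'₁` with the
same neighbourhood `S⁻¹h = S⁻¹h'`, i.e. `h'h⁻¹` lies in the stabilizer of `S` under left
translation. For `S = S₁ ∪ {b}` with `S₁ ⊆ P ∋ 1` this stabilizer is trivial as soon as
neither `b` nor `b²` lies in `P`: `b ∉ P` because `H = P⟨b⟩` is non-abelian while `P` is
abelian, and then `b² ∉ P` because `b` has odd order.
-/

section HaarGraph

open Pointwise

variable {H : Type*} [Group H] {S : Set H}

theorem haarGraph_adj_true_false {h x : H} :
    (haarGraph S).Adj (true, h) (false, x) ↔ h * x⁻¹ ∈ S := by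
  simp [haarGraph]

theorem haarGraph_iso_apply_eq_self_of_fixes_false (hS : MulAction.stabilizer H S = ⊥)
    (f : haarGraph S ≃g haarGraph S) (hf : ∀ h : H, f (false, h) = (false, h)) :
    ∀ v, f v = v := by
  rintro ⟨_ | _, h⟩
  · exact hf h
  rcases hfh : f (true, h) with ⟨i, h'⟩
  obtain rfl : i = true := by
    cases i
    · have := f.injective (hfh.trans (hf h').symm)
      simp at this
    · rfl
  have hnbhd (x : H) : h * x⁻¹ ∈ S ↔ h' * x⁻¹ ∈ S := by
    rw [← haarGraph_adj_true_false, ← haarGraph_adj_true_false, ← f.map_adj_iff, hfh, hf]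
  have hstab : h' * h⁻¹ ∈ MulAction.stabilizer H S := by
    refine MulAction.mem_stabilizer_iff.mpr (Set.ext fun y => ?_)
    rw [Set.mem_smul_set_iff_inv_smul_mem, smul_eq_mul]
    simpa [mul_assoc] using hnbhd (y⁻¹ * h')
  rw [hS, Subgroup.mem_bot, mul_inv_eq_one] at hstab
  rw [hstab]

theorem stabilizer_union_singleton_eq_bot {K : Subgroup H} {b : H} (hSK : S ⊆ K)
    (hS : (1 : H) ∈ S) (hb : b ∉ K) (hb2 : b ^ 2 ∉ K) :
    MulAction.stabilizer H (S ∪ {b}) = ⊥ := by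
  refine (Subgroup.eq_bot_iff_forall _).mpr fun g hg => ?_
  have hmem (y : H) (hy : y ∈ S ∪ {b}) : g * y ∈ S ∪ {b} := by
    rw [← MulAction.mem_stabilizer_iff.mp hg]
    exact Set.smul_mem_smul_set hy
  rcases hmem 1 (.inl hS) with hgS | hgb
  · rcases hmem b (.inr rfl) with hgbS | hgbb
    · have := K.mul_mem (K.inv_mem (hSK (by simpa using hgS))) (hSK hgbS)
      exact absurd (by rwa [inv_mul_cancel_left] at this) hb
    · simpa using hgbb
  · obtain rfl : g = b := by simpa using hgb
    rcases hmem g (.inr rfl) with hS' | hgg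
    · exact absurd (by simpa [pow_two] using hSK hS') hb2
    · simpa using hgg

end HaarGraph

theorem notMem_of_sup_zpowers_eq_top {H : Type*} [Group H] (hH : ¬ ∀ a b : H, a * b = b * a)
    {K : Subgroup H} (hK : ∀ x ∈ K, ∀ y ∈ K, x * y = y * x) {b : H}
    (hKb : K ⊔ Subgroup.zpowers b = ⊤) : b ∉ K := by
  intro hb
  have hKtop : K = ⊤ := by rwa [sup_eq_left.mpr (Subgroup.zpowers_le.mpr hb)] at hKb
  exact hH fun x y => hK x (hKtop ▸ Subgroup.mem_top x) y (hKtop ▸ Subgroup.mem_top y)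

theorem Subgroup.mem_of_pow_two_mem_of_odd_orderOf {G : Type*} [Group G] {K : Subgroup G} {g : G}
    (hg : Odd (orderOf g)) (hg2 : g ^ 2 ∈ K) : g ∈ K := by
  obtain ⟨m, hm⟩ := hg
  have : (g ^ 2) ^ (m + 1) = g := by
    rw [← pow_mul, show 2 * (m + 1) = orderOf g + 1 by omega, pow_succ, pow_orderOf_eq_one,
      one_mul]
  exact this ▸ K.pow_mem hg2 _

theorem Sylow.odd_orderOf_of_mem {G : Type*} [Group G] {q : ℕ} (hq : q.Prime) (hq2 : q ≠ 2)
    (Q : Sylow q G) {g : G} (hg : g ∈ (Q : Subgroup G)) : Odd (orderOf g) := by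
  obtain ⟨k, hk⟩ := Q.isPGroup' ⟨g, hg⟩
  have : orderOf g ∣ q ^ k := orderOf_dvd_of_pow_eq_one (by simpa using congrArg Subtype.val hk)
  exact (hq.odd_of_ne_two hq2).pow.of_dvd_nat this

theorem haar_bipartite_stabilizer_faithful_general
    {H : Type*} [Group H] (p q : ℕ) (hq : q.Prime)
    (hq2 : 2 < q)
    (hIA : IsInnerAbelian H)
    (P : Sylow p H)
    (hPab : ∀ x ∈ (P : Subgroup H), ∀ y ∈ (P : Subgroup H), x * y = y * x)
    (b : H) (Q : Sylow q H) (hQ : (Q : Subgroup H) = Subgroup.zpowers b)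
    (hHPQ : (P : Subgroup H) ⊔ Subgroup.zpowers b = ⊤)
    (S1 : Set H) (hS1P : S1 ⊆ (P : Subgroup H)) (hS1one : (1 : H) ∈ S1)
    (f : haarGraph (S1 ∪ {b}) ≃g haarGraph (S1 ∪ {b}))
    (hfixH0 : ∀ h : H, f (false, h) = (false, h)) :
    ∀ v : Bool × H, f v = v := by
  have hbP : b ∉ (P : Subgroup H) := notMem_of_sup_zpowers_eq_top hIA.1 hPab hHPQ
  have hb_odd : Odd (orderOf b) :=
    Q.odd_orderOf_of_mem hq hq2.ne' (hQ ▸ Subgroup.mem_zpowers b)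
  have hb2P : b ^ 2 ∉ (P : Subgroup H) :=
    fun hb2 => hbP (Subgroup.mem_of_pow_two_mem_of_odd_orderOf hb_odd hb2)
  exact haarGraph_iso_apply_eq_self_of_fixes_false
    (stabilizer_union_singleton_eq_bot hS1P hS1one hbP hb2P) f hfixH0

theorem haar_bipartite_stabilizer_faithful
    {H : Type*} [Group H] [Finite H] (p q : ℕ) (hp : p.Prime) (hq : q.Prime)
    (hpq : p ≠ q) (hq2 : 2 < q)
    (hIA : IsInnerAbelian H)
    (P : Sylow p H) (hPnorm : (P : Subgroup H).Normal)
    (n : ℕ) (hPcard : Nat.card (P : Subgroup H) = p ^ n)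
    (hPelem : ∀ x ∈ (P : Subgroup H), x ^ p = 1)
    (hPab : ∀ x ∈ (P : Subgroup H), ∀ y ∈ (P : Subgroup H), x * y = y * x)
    (b : H) (Q : Sylow q H) (hQ : (Q : Subgroup H) = Subgroup.zpowers b)
    (hHPQ : (P : Subgroup H) ⊔ Subgroup.zpowers b = ⊤)
    (S1 : Set H) (hS1P : S1 ⊆ (P : Subgroup H)) (hS1one : (1 : H) ∈ S1)
    (hS1 : S1 = S1⁻¹ ∨
      (S1.ncard = 4 ∧ (S1 ∩ S1⁻¹).ncard = 3 ∧
        Nat.card (Subgroup.closure S1) = p ^ 2))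
    (f : haarGraph (S1 ∪ {b}) ≃g haarGraph (S1 ∪ {b}))
    (hbip : ∀ v : Bool × H, (f v).1 = v.1)
    (hfixH0 : ∀ h : H, f (false, h) = (false, h)) :
    ∀ v : Bool × H, f v = v :=
  haar_bipartite_stabilizer_faithful_general p q hq hq2 hIA P hPab b Q hQ hHPQ S1 hS1P hS1one f
    hfixH0
end

section
/- Let H be a finite group, let G be a subgroup of the symmetric group Sym(H) containing every right translation R(h): x ↦ xh (h ∈ H), and let G_1 be the stabilizer in G of the identity element 1 of H. If a subset S ⊆ H is invariant under G_1 (i.e., S is a union of G_1-orbits), then S^{-1} = {s^{-1} : s ∈ S} is also invariant under G_1. -/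
/- If `g` fixes `1`, then `k x = g (x s) (g s)⁻¹` is built from `g` and right translations, still
fixes `1`, and sends `s⁻¹` to `(g s)⁻¹`; so invariance of `S` under the stabilizer of `1` carries
over to `S⁻¹`. -/

open Equiv Set

section
variable {H : Type*} [Group H] {G : Subgroup (Perm H)}

theorem exists_mem_fix_one_apply_inv_eq (hR : ∀ h : H, Equiv.mulRight h ∈ G) {g : Perm H}
    (hg : g ∈ G) (hg1 : g 1 = 1) (s : H) : ∃ k ∈ G, k 1 = 1 ∧ k s⁻¹ = (g s)⁻¹ := by
  refine ⟨(Equiv.mulRight (g s))⁻¹ * g * Equiv.mulRight s,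
    G.mul_mem (G.mul_mem (G.inv_mem (hR _)) hg) (hR s), ?_, ?_⟩ <;>
  simp [Perm.mul_apply, hg1]

theorem mapsTo_inv_of_forall_fix_one (hR : ∀ h : H, Equiv.mulRight h ∈ G) {S : Set H}
    (hS : ∀ g ∈ G, g 1 = 1 → MapsTo g S S) {g : Perm H} (hg : g ∈ G) (hg1 : g 1 = 1) :
    MapsTo g S⁻¹ S⁻¹ := by
  intro s hs
  obtain ⟨k, hkG, hk1, hks⟩ := exists_mem_fix_one_apply_inv_eq hR hg hg1 s
  rw [mem_inv, ← hks]
  exact hS k hkG hk1 hs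

end

theorem transitivity_module_inv_closed_general
    {H : Type*} [Group H]
    (G : Subgroup (Equiv.Perm H))
    (hR : ∀ h : H, Equiv.mulRight h ∈ G)
    (S : Set H)
    (hS : ∀ g ∈ G, g 1 = 1 → ⇑g '' S = S) :
    ∀ g ∈ G, g 1 = 1 → ⇑g '' S⁻¹ = S⁻¹ := by
  have hS' : ∀ g ∈ G, g 1 = 1 → MapsTo g S S := fun g hg hg1 ↦
    mapsTo_iff_image_subset.mpr (hS g hg hg1).le
  intro g hg hg1
  have hg1' : g⁻¹ 1 = 1 := by rw [Perm.inv_eq_iff_eq, hg1]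
  exact (g.bijOn' (mapsTo_inv_of_forall_fix_one hR hS' hg hg1)
    (mapsTo_inv_of_forall_fix_one hR hS' (G.inv_mem hg) hg1')).image_eq

theorem transitivity_module_inv_closed
    {H : Type*} [Group H] [Finite H]
    (G : Subgroup (Equiv.Perm H))
    (hR : ∀ h : H, Equiv.mulRight h ∈ G)
    (S : Set H)
    (hS : ∀ g ∈ G, g 1 = 1 → ⇑g '' S = S) :
    ∀ g ∈ G, g 1 = 1 → ⇑g '' S⁻¹ = S⁻¹ :=
  transitivity_module_inv_closed_general G hR S hS
end

section
/- Let H be a finite group, let G be a subgroup of the symmetric group Sym(H) containing every right translation R(h): x ↦ xh (h ∈ H), and let G_1 be the stabilizer in G of the identity element 1 of H. If h ∈ H is fixed by every element of G_1 and S ⊆ H is a single G_1-orbit, then hS = {hs : s ∈ S} and Sh = {sh : s ∈ S} are also single G_1-orbits. -/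
/-!
Write `G₁` for the stabilizer of `1` in `G`. For `g ∈ G` and `y ∈ H` the permutation
`R(g y)⁻¹ g R(y)` lies in `G` and fixes `1`, hence fixes `h`; that is, `g (h y) = h (g y)`, so
left translation by `h` centralizes `G`. In particular `G₁` also fixes `h⁻¹`, and since
conjugation by `R(h)` carries the stabilizer of `h⁻¹` to the stabilizer of `1`, `R(h)`
normalizes `G₁`. A permutation normalizing `G₁` maps `G₁`-orbits onto `G₁`-orbits.
-/

open MulAction Pointwise

lemma MulAction.smul_orbit_eq_orbit_smul_of_mem_normalizer {G X : Type*} [Group G]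
    [MulAction G X] {N : Subgroup G} {g : G} (hg : g ∈ Subgroup.normalizer (N : Set G))
    (a : X) : g • orbit N a = orbit N (g • a) := by
  ext y
  simp only [Set.mem_smul_set, mem_orbit_iff, Subtype.exists, Subgroup.mk_smul]
  constructor
  · rintro ⟨_, ⟨k, hk, rfl⟩, rfl⟩
    exact ⟨g * k * g⁻¹, (Subgroup.mem_normalizer_iff.mp hg k).mp hk, by
      simp only [mul_smul, inv_smul_smul]⟩
  · rintro ⟨k, hk, rfl⟩
    exact ⟨(g⁻¹ * k * g) • a, ⟨g⁻¹ * k * g, (Subgroup.mem_normalizer_iff''.mp hg k).mp hk, rfl⟩,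
      by simp only [mul_smul, smul_inv_smul]⟩

lemma Equiv.Perm.orbit_inf_stabilizer_eq_setOf {α : Type*} (G : Subgroup (Equiv.Perm α))
    (a x : α) :
    orbit (G ⊓ stabilizer (Equiv.Perm α) a : Subgroup _) x = {y | ∃ g ∈ G, g a = a ∧ g x = y} := by
  ext y
  simp [mem_orbit_iff, Subgroup.mem_inf, mem_stabilizer_iff, Equiv.Perm.smul_def, and_assoc]

section PointStabilizer

variable {H : Type*} [Group H] {G : Subgroup (Equiv.Perm H)} {h : H}

lemma mulLeft_mem_centralizer_of_forall_fix (hR : ∀ h : H, Equiv.mulRight h ∈ G)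
    (hfix : ∀ g ∈ G, g 1 = 1 → g h = h) :
    Equiv.mulLeft h ∈ Subgroup.centralizer (G : Set (Equiv.Perm H)) := by
  refine Subgroup.mem_centralizer_iff.mpr fun g hg => Equiv.ext fun y => ?_
  have hconj : (Equiv.mulRight (g y))⁻¹ * g * Equiv.mulRight y ∈ G :=
    mul_mem (mul_mem (inv_mem (hR _)) hg) (hR _)
  have := hfix _ hconj (by simp [Equiv.Perm.mul_apply])
  simp only [Equiv.Perm.mul_apply, Equiv.coe_mulRight, Equiv.Perm.inv_def,
    Equiv.mulRight_symm_apply] at this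
  simpa [Equiv.Perm.mul_apply] using mul_inv_eq_iff_eq_mul.mp this

lemma mulRight_mem_normalizer_of_forall_fix (hR : ∀ h : H, Equiv.mulRight h ∈ G)
    (hfix : ∀ g ∈ G, g 1 = 1 → g h = h) :
    Equiv.mulRight h ∈
      Subgroup.normalizer ((G ⊓ stabilizer (Equiv.Perm H) (1 : H) : Subgroup _) : Set _) := by
  have hcomm := Subgroup.mem_centralizer_iff.mp (mulLeft_mem_centralizer_of_forall_fix hR hfix)
  refine Subgroup.mem_normalizer_iff.mpr fun g => ?_
  simp only [Subgroup.mem_inf, mem_stabilizer_iff, Equiv.Perm.smul_def,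
    ← Subgroup.mem_normalizer_iff.mp (Subgroup.le_normalizer (hR h)) g]
  refine and_congr_right fun hg => ?_
  have hinv : g h⁻¹ = h⁻¹ * g 1 := by
    simpa [Equiv.Perm.mul_apply, eq_inv_mul_iff_mul_eq] using congr($(hcomm g hg) h⁻¹).symm
  simp only [Equiv.Perm.mul_apply, Equiv.Perm.inv_def, Equiv.mulRight_symm_apply, one_mul,
    hinv, Equiv.coe_mulRight, mul_assoc, inv_mul_eq_one, right_eq_mul]

lemma mulLeft_mem_normalizer_of_forall_fix (hR : ∀ h : H, Equiv.mulRight h ∈ G)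
    (hfix : ∀ g ∈ G, g 1 = 1 → g h = h) :
    Equiv.mulLeft h ∈
      Subgroup.normalizer ((G ⊓ stabilizer (Equiv.Perm H) (1 : H) : Subgroup _) : Set _) :=
  Subgroup.centralizer_le_normalizer _ <|
    Subgroup.centralizer_le Set.inter_subset_left (mulLeft_mem_centralizer_of_forall_fix hR hfix)

end PointStabilizer

theorem translate_of_orbit_is_orbit_general
    {H : Type*} [Group H]
    (G : Subgroup (Equiv.Perm H))
    (hR : ∀ h : H, Equiv.mulRight h ∈ G)
    (h : H) (hfix : ∀ g ∈ G, g 1 = 1 → g h = h)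
    (S : Set H)
    (hS : ∃ x : H, S = {y : H | ∃ g ∈ G, g 1 = 1 ∧ g x = y}) :
    (∃ x : H, (fun s => h * s) '' S = {y : H | ∃ g ∈ G, g 1 = 1 ∧ g x = y}) ∧
    (∃ x : H, (fun s => s * h) '' S = {y : H | ∃ g ∈ G, g 1 = 1 ∧ g x = y}) := by
  obtain ⟨x, rfl⟩ := hS
  simp only [← Equiv.Perm.orbit_inf_stabilizer_eq_setOf]
  exact ⟨⟨h * x, smul_orbit_eq_orbit_smul_of_mem_normalizer
      (mulLeft_mem_normalizer_of_forall_fix hR hfix) x⟩,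
    ⟨x * h, smul_orbit_eq_orbit_smul_of_mem_normalizer
      (mulRight_mem_normalizer_of_forall_fix hR hfix) x⟩⟩

theorem translate_of_orbit_is_orbit
    {H : Type*} [Group H] [Finite H]
    (G : Subgroup (Equiv.Perm H))
    (hR : ∀ h : H, Equiv.mulRight h ∈ G)
    (h : H) (hfix : ∀ g ∈ G, g 1 = 1 → g h = h)
    (S : Set H)
    (hS : ∃ x : H, S = {y : H | ∃ g ∈ G, g 1 = 1 ∧ g x = y}) :
    (∃ x : H, (fun s => h * s) '' S = {y : H | ∃ g ∈ G, g 1 = 1 ∧ g x = y}) ∧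
    (∃ x : H, (fun s => s * h) '' S = {y : H | ∃ g ∈ G, g 1 = 1 ∧ g x = y}) :=
  translate_of_orbit_is_orbit_general G hR h hfix S hS
end

section
/- Let H be a finite group, let G be a subgroup of the symmetric group Sym(H) containing every right translation R(h): x ↦ xh (h ∈ H), and let G_1 be the stabilizer in G of the identity element 1 of H. If a subset S ⊆ H is invariant under G_1 (a union of G_1-orbits), then the subgroup ⟨S⟩ generated by S is a block of imprimitivity for the action of G on H; that is, for every g ∈ G, the image ⟨S⟩^g either equals ⟨S⟩ or is disjoint from ⟨S⟩. -/
/-! Conjugating `g ∈ G` by right translations gives `g (x * a) = g' x * g a` with `g'` in the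
stabilizer of `1`; by induction on the closure, the stabilizer therefore preserves `⟨S⟩`. Taking
`a = 1`, every `g ∈ G` maps `⟨S⟩` onto the right coset `⟨S⟩ * g 1`, and right cosets of a
subgroup form a block system. -/

open MulOpposite
open scoped Pointwise

theorem Equiv.Perm.subgroup_smul_set_eq_image {α : Type*} {G : Subgroup (Equiv.Perm α)} (g : G)
    (s : Set α) : g • s = ⇑(g : Equiv.Perm α) '' s :=
  Set.image_smul.symm

section

variable {H : Type*} [Group H] {G : Subgroup (Equiv.Perm H)}

theorem exists_fixing_one_apply_mul (hR : ∀ h : H, Equiv.mulRight h ∈ G) {g : Equiv.Perm H}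
    (hg : g ∈ G) (a : H) : ∃ g' ∈ G, g' 1 = 1 ∧ ∀ x, g (x * a) = g' x * g a :=
  ⟨(Equiv.mulRight (g a))⁻¹ * g * Equiv.mulRight a,
    G.mul_mem (G.mul_mem (G.inv_mem (hR _)) hg) (hR a), by simp, by simp⟩

theorem mapsTo_closure_of_fixing_one (hR : ∀ h : H, Equiv.mulRight h ∈ G) {S : Set H}
    (hS : ∀ g ∈ G, g 1 = 1 → Set.MapsTo g S S) {g : Equiv.Perm H} (hg : g ∈ G) (hg1 : g 1 = 1) :
    Set.MapsTo g (Subgroup.closure S) (Subgroup.closure S) := by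
  intro x hx
  induction hx using Subgroup.closure_induction generalizing g with
  | mem s hs => exact Subgroup.subset_closure (hS g hg hg1 hs)
  | one => simp [hg1]
  | mul a b _ _ iha ihb =>
    obtain ⟨g', hg', hg'1, hmul⟩ := exists_fixing_one_apply_mul hR hg b
    rw [SetLike.mem_coe, hmul]
    exact mul_mem (iha hg' hg'1) (ihb hg hg1)
  | inv a _ iha =>
    obtain ⟨g', hg', hg'1, hmul⟩ := exists_fixing_one_apply_mul hR hg a⁻¹
    have hinv : g a⁻¹ = (g' a)⁻¹ := eq_inv_of_mul_eq_one_right (by rw [← hmul, mul_inv_cancel, hg1])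
    rw [SetLike.mem_coe, hinv]
    exact inv_mem (iha hg' hg'1)

theorem image_closure_of_fixing_one (hR : ∀ h : H, Equiv.mulRight h ∈ G) {S : Set H}
    (hS : ∀ g ∈ G, g 1 = 1 → Set.MapsTo g S S) {g : Equiv.Perm H} (hg : g ∈ G) (hg1 : g 1 = 1) :
    g '' Subgroup.closure S = Subgroup.closure S := by
  refine (mapsTo_closure_of_fixing_one hR hS hg hg1).image_subset.antisymm fun x hx => ?_
  have hinv1 : g⁻¹ 1 = 1 := by rw [Equiv.Perm.inv_eq_iff_eq, hg1]
  exact ⟨g⁻¹ x, mapsTo_closure_of_fixing_one hR hS (G.inv_mem hg) hinv1 hx, by simp⟩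

theorem isBlock_closure_of_fixing_one (hR : ∀ h : H, Equiv.mulRight h ∈ G) {S : Set H}
    (hS : ∀ g ∈ G, g 1 = 1 → Set.MapsTo g S S) :
    MulAction.IsBlock G (Subgroup.closure S : Set H) := by
  rw [MulAction.isBlock_iff_smul_eq_or_disjoint]
  rintro ⟨g, hg⟩
  obtain ⟨g', hg', hg'1, hmul⟩ := exists_fixing_one_apply_mul hR hg 1
  have hcoset : g '' Subgroup.closure S = op (g 1) • (Subgroup.closure S : Set H) := by
    calc g '' Subgroup.closure S = (· * g 1) '' (g' '' Subgroup.closure S) := by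
          simp only [Set.image_image, ← hmul, mul_one]
      _ = op (g 1) • (Subgroup.closure S : Set H) := by
          rw [image_closure_of_fixing_one hR hS hg' hg'1, ← Set.image_smul]; rfl
  rw [Equiv.Perm.subgroup_smul_set_eq_image, hcoset]
  exact (MulAction.isBlock_subgroup' (G := Hᵐᵒᵖ)).smul_eq_or_disjoint _

end

theorem closure_of_invariant_set_is_block_general
    {H : Type*} [Group H]
    (G : Subgroup (Equiv.Perm H))
    (hR : ∀ h : H, Equiv.mulRight h ∈ G)
    (S : Set H)
    (hS : ∀ g ∈ G, g 1 = 1 → ⇑g '' S = S) :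
    ∀ g ∈ G, ⇑g '' (Subgroup.closure S : Set H) = (Subgroup.closure S : Set H) ∨
      Disjoint (⇑g '' (Subgroup.closure S : Set H)) (Subgroup.closure S : Set H) := by
  intro g hg
  simpa only [Equiv.Perm.subgroup_smul_set_eq_image] using (isBlock_closure_of_fixing_one hR
    (fun g hg hg1 => Set.mapsTo_iff_image_subset.2 (hS g hg hg1).le)).smul_eq_or_disjoint ⟨g, hg⟩

theorem closure_of_invariant_set_is_block
    {H : Type*} [Group H] [Finite H]
    (G : Subgroup (Equiv.Perm H))
    (hR : ∀ h : H, Equiv.mulRight h ∈ G)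
    (S : Set H)
    (hS : ∀ g ∈ G, g 1 = 1 → ⇑g '' S = S) :
    ∀ g ∈ G, ⇑g '' (Subgroup.closure S : Set H) = (Subgroup.closure S : Set H) ∨
      Disjoint (⇑g '' (Subgroup.closure S : Set H)) (Subgroup.closure S : Set H) :=
  closure_of_invariant_set_is_block_general G hR S hS
end

section
/- Let H be a finite group, let G be a subgroup of the symmetric group Sym(H) containing every right translation R(h): x ↦ xh (h ∈ H), and let G_1 be the stabilizer in G of the identity element 1 of H. If h ∈ H is fixed by every element of G_1, then the left translation L(h): x ↦ h^{-1}x commutes with every element of G; that is, L(h) lies in the centralizer of G in Sym(H). -/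
/-! For `g ∈ G` and `x ∈ H`, the permutation `R((g x)⁻¹) g R(x)` lies in `G` and fixes `1`, hence fixes
`h`; unfolded, this says `g (h * x) = h * g x`, i.e. `g` commutes with left multiplication by `h`. -/

namespace Equiv.Perm

variable {H : Type*} [Group H]

def fixOneAt (g : Perm H) (x : H) : Perm H :=
  Equiv.mulRight (g x)⁻¹ * g * Equiv.mulRight x

theorem fixOneAt_apply (g : Perm H) (x y : H) : fixOneAt g x y = g (y * x) * (g x)⁻¹ := by
  simp [fixOneAt]

theorem fixOneAt_apply_one (g : Perm H) (x : H) : fixOneAt g x 1 = 1 := by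
  simp [fixOneAt_apply]

theorem fixOneAt_mem {G : Subgroup (Perm H)} (hR : ∀ h : H, Equiv.mulRight h ∈ G)
    {g : Perm H} (hg : g ∈ G) (x : H) : fixOneAt g x ∈ G :=
  G.mul_mem (G.mul_mem (hR _) hg) (hR x)

theorem apply_mul_eq_mul_apply_of_fixOneAt {g : Perm H} {h x : H} (hfix : fixOneAt g x h = h) :
    g (h * x) = h * g x := by
  rwa [fixOneAt_apply, mul_inv_eq_iff_eq_mul] at hfix

end Equiv.Perm

theorem left_translation_centralizes_general
    {H : Type*} [Group H]
    (G : Subgroup (Equiv.Perm H))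
    (hR : ∀ h : H, Equiv.mulRight h ∈ G)
    (h : H) (hfix : ∀ g ∈ G, g 1 = 1 → g h = h) :
    ∀ g ∈ G, ∀ x : H, g (h⁻¹ * x) = h⁻¹ * g x := by
  intro g hg x
  have hcomm : g (h * (h⁻¹ * x)) = h * g (h⁻¹ * x) :=
    Equiv.Perm.apply_mul_eq_mul_apply_of_fixOneAt <|
      hfix _ (Equiv.Perm.fixOneAt_mem hR hg _) (Equiv.Perm.fixOneAt_apply_one g _)
  rw [mul_inv_cancel_left] at hcomm
  rw [hcomm, inv_mul_cancel_left]

theorem left_translation_centralizes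
    {H : Type*} [Group H] [Finite H]
    (G : Subgroup (Equiv.Perm H))
    (hR : ∀ h : H, Equiv.mulRight h ∈ G)
    (h : H) (hfix : ∀ g ∈ G, g 1 = 1 → g h = h) :
    ∀ g ∈ G, ∀ x : H, g (h⁻¹ * x) = h⁻¹ * g x :=
  left_translation_centralizes_general G hR h hfix
end

section
/- Let p and q be distinct primes and let H be a finite inner abelian group with a normal elementary abelian Sylow p-subgroup P of order p^n and a cyclic Sylow q-subgroup Q = ⟨b⟩, so that H = P⟨b⟩. Then: (i) the centralizer C_P(Q) is trivial; (ii) conjugation by b induces a fixed-point-free automorphism of P of order exactly q (in particular b^q centralizes P); (iii) for every non-identity element a ∈ P, the subgroup generated by the Q-orbit a^Q = {b^{-i} a b^{i} : 0 ≤ i < q} is all of P; (iv) n < q; and (v) q divides p^n − 1. -/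
/-!
Let `φ` be conjugation by `b⁻¹` on the elementary abelian group `P`. As `H` is inner abelian, `b`
centralizes every proper subgroup `W < P` it normalizes (`W⟨b⟩` is proper), and `b ^ q`
centralizes `P` (`P⟨b ^ q⟩` misses `b`), so `φ ^ q = 1`. The image of `x ↦ φ x / x` is
`φ`-stable; were it proper, `φ x = x c` with `φ c = c`, and `φ ^ q = 1` would give `c ^ q = 1`,
so `c = 1` and `b` would centralize `P`, making `H` abelian. Hence `x ↦ φ x / x` is bijective and
`φ` has no fixed point but `1`. The subgroup generated by the orbit of any `a ≠ 1` is
`φ`-stable but not fixed, hence is `P`; the orbit product `∏ φ ^ i a` is fixed, hence `1`, so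
`q - 1` orbit elements suffice and `p ^ n ≤ p ^ (q - 1)`. Finally `⟨φ⟩` is a `q`-group acting on
`P` with `1` as only fixed point, so `p ^ n ≡ 1 [MOD q]`.
-/

open Subgroup
open scoped Pointwise

theorem commute_iff_inv_mul_mul_eq {G : Type*} [Group G] {b c : G} :
    Commute b c ↔ b⁻¹ * c * b = c := by
  rw [mul_assoc, inv_mul_eq_iff_eq_mul, eq_comm]
  rfl

theorem Subgroup.inf_sup_eq_of_le_of_disjoint {G : Type*} [Group G] {A B W : Subgroup G}
    (hWA : W ≤ A) (hAB : Disjoint A B) (hWB : ((W ⊔ B : Subgroup G) : Set G) = (W : Set G) * B) :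
    A ⊓ (W ⊔ B) = W := by
  apply SetLike.coe_injective
  rw [coe_inf, hWB, Set.inter_comm, ← mul_inf_assoc W B A hWA, inf_comm, hAB.eq_bot, coe_bot,
    Set.mul_singleton, Set.image_mul_right, inv_one]
  simp

theorem Subgroup.mem_normalizer_of_map_conj_le {G : Type*} [Group G] [Finite G] {K : Subgroup G}
    {g : G} (h : K.map (MulAut.conj g).toMonoidHom ≤ K) : g ∈ normalizer (K : Set G) :=
  mem_normalizer_iff_map_conj_eq.mpr <| eq_of_le_of_card_ge h
    (card_map_of_injective (MulAut.conj g).injective).ge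

theorem IsPGroup.notMem_zpowers_pow {G : Type*} [Group G] {q : ℕ} [Fact q.Prime] {b : G}
    (hb : IsPGroup q (zpowers b)) (hb1 : b ≠ 1) : b ∉ zpowers (b ^ q) := by
  have hq : q ∣ orderOf b := by
    simpa using hb.dvd_orderOf (g := ⟨b, mem_zpowers b⟩) (by simpa [Subtype.ext_iff] using hb1)
  rw [mem_zpowers_pow_iff, Nat.gcd_eq_left hq]
  exact (Fact.out : q.Prime).one_lt.ne'

theorem MulAut.conjNormal_inv_pow_apply {G : Type*} [Group G] {P : Subgroup G} [P.Normal]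
    (b : G) (i : ℕ) (x : P) : (((MulAut.conjNormal b)⁻¹ ^ i) x : G) = (b ^ i)⁻¹ * x * b ^ i := by
  rw [show (MulAut.conjNormal b)⁻¹ ^ i = (MulAut.conjNormal (b ^ i))⁻¹ by rw [map_pow, inv_pow],
    MulAut.conjNormal_inv_apply]

theorem MulAut.conjNormal_inv_apply_eq_self_iff {G : Type*} [Group G] {P : Subgroup G} [P.Normal]
    {b : G} {x : P} : (MulAut.conjNormal b)⁻¹ x = x ↔ Commute b x := by
  rw [commute_iff_inv_mul_mul_eq, ← MulAut.conjNormal_inv_apply, Subtype.ext_iff]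

theorem CommGroup.card_le_pow_of_closure_eq_top {A : Type*} [CommGroup A] {p k : ℕ} [NeZero p]
    (hA : ∀ x : A, x ^ p = 1) (g : Fin k → A) (hg : closure (Set.range g) = ⊤) :
    Nat.card A ≤ p ^ k := by
  have hsurj : Function.Surjective fun e : Fin k → Fin p => ∏ i, g i ^ (e i : ℕ) := by
    intro x
    obtain ⟨e, rfl⟩ := mem_closure_range_iff_of_fintype.mp (hg ▸ mem_top x)
    have hp : (0 : ℤ) < p := Int.natCast_pos.mpr (NeZero.pos p)
    refine ⟨fun i => ⟨(e i % p).toNat, ?_⟩, Finset.prod_congr rfl fun i _ => ?_⟩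
    · have := Int.emod_lt_of_pos (e i) hp
      have := Int.emod_nonneg (e i) hp.ne'
      omega
    · rw [zpow_eq_zpow_emod' (e i) (hA (g i)), ← zpow_natCast,
        Int.toNat_of_nonneg (Int.emod_nonneg _ hp.ne')]
  simpa using Nat.card_le_card_of_surjective _ hsurj

namespace MulAut

variable {A : Type*}

def FixesProperStable [Group A] (φ : MulAut A) : Prop :=
  ∀ W : Subgroup A, W ≠ ⊤ → W.map φ.toMonoidHom ≤ W → ∀ w ∈ W, φ w = w

theorem pow_apply_eq_mul_pow [Group A] {φ : MulAut A} {x c : A} (hc : φ c = c)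
    (hx : φ x = x * c) (k : ℕ) : (φ ^ k) x = x * c ^ k := by
  induction k with
  | zero => simp
  | succ k ih => rw [pow_succ', mul_apply, ih, map_mul, hx, map_pow, hc, pow_succ', mul_assoc]

theorem card_modEq_one [Group A] [Finite A] {φ : MulAut A} {q : ℕ} [Fact q.Prime]
    (hφq : φ ^ q = 1) (hfix : ∀ x : A, φ x = x → x = 1) : Nat.card A ≡ 1 [MOD q] := by
  have hpgroup : IsPGroup q (zpowers φ) := by
    rintro ⟨_, k, rfl⟩
    refine ⟨1, Subtype.ext ?_⟩
    simp only [pow_one, SubmonoidClass.coe_pow, OneMemClass.coe_one]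
    rw [← zpow_natCast, ← zpow_mul, mul_comm, zpow_mul, zpow_natCast, hφq, one_zpow]
  have hfixed : MulAction.fixedPoints (zpowers φ) A = {1} := by
    ext x
    refine ⟨fun hx => hfix x (hx ⟨φ, mem_zpowers φ⟩), ?_⟩
    rintro rfl g
    exact map_one (g : MulAut A)
  simpa [hfixed] using hpgroup.card_modEq_card_fixedPoints A

variable [CommGroup A]

theorem eq_one_of_apply_eq_self [Finite A] {φ : MulAut A} {p q : ℕ} (hA : ∀ x : A, x ^ p = 1)
    (hpq : p.Coprime q) (hφq : φ ^ q = 1) (hφ : φ.FixesProperStable) (hφ1 : φ ≠ 1) {x : A}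
    (hx : φ x = x) : x = 1 := by
  let ψ : A →* A := φ.toMonoidHom / MonoidHom.id A
  have hψ : ∀ x, ψ x = φ x / x := fun _ => rfl
  have hrange : ψ.range = ⊤ := by
    by_contra hne
    refine hφ1 (MulEquiv.ext fun x => ?_)
    have hc := hφ ψ.range hne (by
      rintro _ ⟨_, ⟨y, rfl⟩, rfl⟩
      exact ⟨φ y, by simp [hψ]⟩) (ψ x) ⟨x, rfl⟩
    have hcq := pow_apply_eq_mul_pow hc (mul_div_cancel x (φ x)).symm q
    rw [hφq, one_apply, left_eq_mul] at hcq
    have hc1 : ψ x = 1 := by simpa [hpq.gcd_eq_one] using pow_gcd_eq_one.mpr ⟨hA (ψ x), hcq⟩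
    rwa [one_apply, ← div_eq_one, ← hψ]
  have hinj : Function.Injective ψ :=
    Finite.injective_iff_surjective.mpr (MonoidHom.range_eq_top.mp hrange)
  exact hinj (by simp [hψ, hx])

theorem apply_prod_range_pow_apply {φ : MulAut A} {q : ℕ} (hφq : φ ^ q = 1) (a : A) :
    φ (∏ i ∈ Finset.range q, (φ ^ i) a) = ∏ i ∈ Finset.range q, (φ ^ i) a := by
  have h := (Finset.prod_range_succ' (fun i => (φ ^ i) a) q).symm.trans
    (Finset.prod_range_succ (fun i => (φ ^ i) a) q)
  rw [hφq, pow_zero] at h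
  simpa [map_prod, ← mul_apply, ← pow_succ'] using mul_right_cancel h

theorem closure_pow_apply_eq_top {φ : MulAut A} {q : ℕ} (hq : 1 < q) (hφq : φ ^ q = 1)
    (hfix : ∀ x : A, φ x = x → x = 1) (hφ : φ.FixesProperStable) {a : A} (ha : a ≠ 1) :
    closure (Set.range fun i : Fin (q - 1) => (φ ^ (i : ℕ)) a) = ⊤ := by
  set W := closure (Set.range fun i : Fin (q - 1) => (φ ^ (i : ℕ)) a)
  have hmem : ∀ i < q, (φ ^ i) a ∈ W := by
    have hlast : (φ ^ (q - 1)) a ∈ W := by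
      have h := hfix _ (apply_prod_range_pow_apply hφq a)
      rw [← Nat.sub_add_cancel hq.le, Finset.prod_range_succ, mul_eq_one_iff_eq_inv'] at h
      rw [h]
      exact W.inv_mem (W.prod_mem fun i hi => subset_closure
        ⟨⟨i, Finset.mem_range.mp hi⟩, rfl⟩)
    intro i hi
    rcases Nat.lt_or_ge i (q - 1) with h | h
    · exact subset_closure ⟨⟨i, h⟩, rfl⟩
    · rwa [show i = q - 1 by omega]
  by_contra hW
  refine ha (hfix a (hφ W hW ?_ a (by simpa using hmem 0 (by omega))))
  rw [map_le_iff_le_comap, closure_le]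
  rintro _ ⟨i, rfl⟩
  show φ ((φ ^ (i : ℕ)) a) ∈ W
  rw [← mul_apply, ← pow_succ']
  exact hmem _ (by omega)

end MulAut

namespace IsInnerAbelian

variable {H : Type*} [Group H] {P : Subgroup H} {b : H}

theorem commute_of_lt (hIA : IsInnerAbelian H) (hdisj : Disjoint P (zpowers b))
    {W : Subgroup H} (hWP : W < P) (hb : b ∈ normalizer (W : Set H)) {w : H} (hw : w ∈ W) :
    Commute b w := by
  have hK : W ⊔ zpowers b ≠ ⊤ := by
    intro hK
    have := inf_sup_eq_of_le_of_disjoint hWP.le hdisj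
      (coe_mul_of_right_le_normalizer_left W _ ((zpowers_le (G := H)).mpr hb))
    rw [hK, inf_top_eq] at this
    exact hWP.ne this.symm
  exact hIA.2 _ hK b w (mem_sup_right (mem_zpowers b)) (mem_sup_left hw)

theorem commute_pow (hIA : IsInnerAbelian H) [P.Normal] (hdisj : Disjoint P (zpowers b)) {r : ℕ}
    (hr : b ∉ zpowers (b ^ r)) {x : H} (hx : x ∈ P) : Commute (b ^ r) x := by
  have hK : zpowers (b ^ r) ⊔ P ≠ ⊤ := by
    intro hK
    have := inf_sup_eq_of_le_of_disjoint (zpowers_le.mpr (pow_mem (mem_zpowers b) r))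
      hdisj.symm (mul_normal _ P)
    rw [hK, inf_top_eq] at this
    exact hr (this ▸ mem_zpowers b)
  exact hIA.2 _ hK _ x (mem_sup_left (mem_zpowers _)) (mem_sup_right hx)

theorem conjNormal_inv_pow_eq_one (hIA : IsInnerAbelian H) [P.Normal]
    (hdisj : Disjoint P (zpowers b)) {q : ℕ} [Fact q.Prime] (hbq : IsPGroup q (zpowers b))
    (hb1 : b ≠ 1) : ((MulAut.conjNormal b)⁻¹ : MulAut P) ^ q = 1 :=
  MulEquiv.ext fun x => Subtype.ext <| by
    rw [MulAut.conjNormal_inv_pow_apply, MulAut.one_apply, ← commute_iff_inv_mul_mul_eq]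
    exact hIA.commute_pow hdisj (hbq.notMem_zpowers_pow hb1) x.2

theorem conjNormal_inv_ne_one (hIA : IsInnerAbelian H) [P.Normal]
    (hPab : ∀ x ∈ P, ∀ y ∈ P, x * y = y * x) (hPb : P ⊔ zpowers b = ⊤) :
    ((MulAut.conjNormal b)⁻¹ : MulAut P) ≠ 1 := by
  intro h1
  have hb (x : H) (hx : x ∈ P) : Commute b x :=
    (MulAut.conjNormal_inv_apply_eq_self_iff (x := ⟨x, hx⟩)).mp (by rw [h1]; rfl)
  have hS : ↑P ∪ {b} ⊆ (centralizer (↑P ∪ {b}) : Set H) := by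
    rintro x (hx | rfl) y (hy | rfl)
    · exact hPab y hy x hx
    · exact (hb x hx).eq
    · exact (hb y hy).eq.symm
    · rfl
  have htop : closure (↑P ∪ {b}) = ⊤ := by
    rw [Subgroup.closure_union, closure_eq, ← zpowers_eq_closure, hPb]
  rw [← closure_le, ← centralizer_closure, htop] at hS
  exact hIA.1 fun x y => (mem_centralizer_iff.mp (hS (mem_top y)) x (mem_top x))

theorem fixesProperStable_conjNormal_inv [Finite H] [P.Normal] (hIA : IsInnerAbelian H)
    (hdisj : Disjoint P (zpowers b)) :
    ((MulAut.conjNormal b)⁻¹ : MulAut P).FixesProperStable := by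
  intro W hW hWφ w hw
  have hlt : W.map P.subtype < P := by
    have := (map_lt_map_iff_of_injective P.subtype_injective).mpr (lt_top_iff_ne_top.mpr hW)
    rwa [← MonoidHom.range_eq_map, range_subtype] at this
  have hb : b ∈ normalizer (W.map P.subtype : Set H) := by
    rw [← inv_mem_iff]
    refine mem_normalizer_of_map_conj_le ?_
    rintro _ ⟨_, ⟨x, hx, rfl⟩, rfl⟩
    exact ⟨_, hWφ ⟨x, hx, rfl⟩, by simp⟩
  exact MulAut.conjNormal_inv_apply_eq_self_iff.mpr (hIA.commute_of_lt hdisj hlt hb ⟨w, hw, rfl⟩)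

end IsInnerAbelian

theorem closure_conj_orbit_eq {H : Type*} [Group H] {P : Subgroup H} [P.Normal] {b : H}
    {a : H} (ha : a ∈ P) {k q : ℕ} (hkq : k ≤ q) (hgen : closure (Set.range fun i : Fin k =>
      ((MulAut.conjNormal b)⁻¹ ^ (i : ℕ)) (⟨a, ha⟩ : P)) = ⊤) :
    closure {x : H | ∃ i : ℕ, i < q ∧ x = (b ^ i)⁻¹ * a * b ^ i} = P := by
  refine le_antisymm (closure_le _ |>.mpr ?_) ?_
  · rintro _ ⟨i, -, rfl⟩
    exact MulAut.conjNormal_inv_pow_apply b i ⟨a, ha⟩ ▸ (_ : P).2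
  · have := congrArg (map P.subtype) hgen
    rw [MonoidHom.map_closure, ← MonoidHom.range_eq_map, range_subtype] at this
    rw [← this]
    refine closure_mono ?_
    rintro _ ⟨_, ⟨i, rfl⟩, rfl⟩
    exact ⟨i, by omega, MulAut.conjNormal_inv_pow_apply b i ⟨a, ha⟩⟩

theorem inner_abelian_pq_structure
    {H : Type*} [Group H] [Finite H] (p q : ℕ) (hp : p.Prime) (hq : q.Prime)
    (hpq : p ≠ q) (hIA : IsInnerAbelian H)
    (P : Sylow p H) (hPnorm : (P : Subgroup H).Normal)
    (n : ℕ) (hPcard : Nat.card (P : Subgroup H) = p ^ n)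
    (hPelem : ∀ x ∈ (P : Subgroup H), x ^ p = 1)
    (hPab : ∀ x ∈ (P : Subgroup H), ∀ y ∈ (P : Subgroup H), x * y = y * x)
    (b : H) (Q : Sylow q H) (hQ : (Q : Subgroup H) = Subgroup.zpowers b)
    (hHPQ : (P : Subgroup H) ⊔ Subgroup.zpowers b = ⊤) :
    -- (i) the centralizer of `Q` in `P` is trivial
    (∀ x ∈ (P : Subgroup H), (∀ y ∈ Subgroup.zpowers b, x * y = y * x) → x = 1) ∧
    -- (ii) conjugation by `b` is fixed-point-free on `P` ...
    (∀ x ∈ (P : Subgroup H), x ≠ 1 → b⁻¹ * x * b ≠ x) ∧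
    -- ... of order exactly `q`: in particular `b ^ q` centralizes `P`
    (∀ x ∈ (P : Subgroup H), (b ^ q)⁻¹ * x * b ^ q = x) ∧
    -- (iii) the `Q`-orbit of any non-identity `a ∈ P` generates `P`
    (∀ a ∈ (P : Subgroup H), a ≠ 1 →
      Subgroup.closure {x : H | ∃ i : ℕ, i < q ∧ x = (b ^ i)⁻¹ * a * b ^ i} =
        (P : Subgroup H)) ∧
    -- (iv) and (v)
    n < q ∧ q ∣ p ^ n - 1 := by
  have hQq : IsPGroup q (zpowers b) := hQ ▸ Q.isPGroup'
  have hpq' : p.Coprime q := (Nat.coprime_primes hp hq).mpr hpq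
  have hdisj : Disjoint (P : Subgroup H) (zpowers b) := P.isPGroup'.disjoint_of_coprime hQq hpq'
  generalize (P : Subgroup H) = P at *
  have := hPnorm
  have : Fact q.Prime := ⟨hq⟩
  have : NeZero p := ⟨hp.ne_zero⟩
  let _ : CommGroup P := { mul_comm := fun x y => Subtype.ext (hPab x x.2 y y.2) }
  have hexp (x : P) : x ^ p = 1 := Subtype.ext (hPelem x x.2)
  have hφ1 := hIA.conjNormal_inv_ne_one hPab hHPQ
  have hφq := hIA.conjNormal_inv_pow_eq_one hdisj hQq (by rintro rfl; simp at hφ1)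
  have hstable := hIA.fixesProperStable_conjNormal_inv hdisj
  have hfix (x : P) := MulAut.eq_one_of_apply_eq_self hexp hpq' hφq hstable hφ1 (x := x)
  have hgen {a : P} (ha : a ≠ 1) := MulAut.closure_pow_apply_eq_top hq.one_lt hφq hfix hstable ha
  have hfixH (x : H) (hx : x ∈ P) (h : Commute b x) : x = 1 :=
    congrArg Subtype.val (hfix ⟨x, hx⟩ (MulAut.conjNormal_inv_apply_eq_self_iff.mpr h))
  refine ⟨fun x hx hxb => hfixH x hx (hxb b (mem_zpowers b)).symm,
    fun x hx hx1 hxb => hx1 (hfixH x hx (commute_iff_inv_mul_mul_eq.mpr hxb)),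
    fun x hx => (MulAut.conjNormal_inv_pow_apply b q ⟨x, hx⟩).symm.trans (by rw [hφq]; rfl),
    fun a ha ha1 => closure_conj_orbit_eq ha (Nat.sub_le q 1)
      (hgen (by simpa [Subtype.ext_iff] using ha1)), ?_, ?_⟩
  · obtain ⟨a, ha⟩ := DFunLike.ne_iff.mp hφ1
    have := CommGroup.card_le_pow_of_closure_eq_top hexp _
      (hgen (a := a) fun h => ha (by simp [h]))
    rw [hPcard, Nat.pow_le_pow_iff_right hp.one_lt] at this
    have := hq.one_lt
    omega
  · have := MulAut.card_modEq_one hφq hfix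
    rw [hPcard] at this
    exact (Nat.modEq_iff_dvd' (Nat.one_le_pow _ _ hp.pos)).mp this.symm
end
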